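/- Suppose a configuration satisfies: Tree Initially; d(u) ≤ d̄_u for every node u; Root Child (for every i ∈ ℛ, d̄_i ≥ 1 and d_i(i) ≥ 1); Diversity Degree (d̄_u ≠ 1 for every non-root node u); for every j ∈ ℛ, both endpoints of every edge of E_j belong to V_j; and Shower Head: there is an integer c ≥ 1 such that for every i ∈ ℛ there are at least M nodes u with L_i(u) = c. If no Jump, no LeafSwap, and no MixSwap is applicable at any tuple, then for every i ∈ ℛ and every u ∈ V_i, L_i(u) ≤ log₂(N + 1) + c. -/

import Mathlib

/-!
Fix a color `i` and a node at depth `n > c` in tree `i`, and let `L_d` be the set of nodes at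
depth `d`. For `c ≤ d ≤ n - 2`, every node of `L_d` has an `i`-child (otherwise a LeafSwap with
the parent of the deep node applies) and total out-degree at least two (a non-root node is
saturated, since otherwise a Jump applies, and its cap is not `1`; a root also feeds its own
tree). So a node of `L_d` with a single `i`-child has an out-edge of some other color `j`, and
MixSwap-stability forbids two nodes of the same level from sharing such a `j`. At most `M - 1`
nodes of `L_d` are thin, whence `2 |L_d| ≤ |L_{d+1}| + (M - 1)`. Starting from `|L_c| ≥ M`
this gives `|L_{c+k}| ≥ 2^k + M - 1`, and summing over the disjoint levels `c, …, n - 1` yields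
`2^(n-c) ≤ N + 1`.
-/

namespace P2P

/-- A walk of length `n` from `r` to `u` in the edge set `E`. -/
def Walk {α : Type*} (E : Finset (α × α)) (r u : α) (n : ℕ) : Prop :=
  ∃ f : ℕ → α, f 0 = r ∧ f n = u ∧ ∀ k < n, (f k, f (k + 1)) ∈ E

/-- Depth of `u` below root `r`: minimal number of edges of a directed walk
(equivalently, of a directed path) from `r` to `u`; `⊤` if unreachable. -/
noncomputable def depth {α : Type*} (E : Finset (α × α)) (r u : α) : ℕ∞ :=
  sInf {n : ℕ∞ | ∃ m : ℕ, n = (m : ℕ∞) ∧ Walk E r u m}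

/-- Out-degree of `u` in `E`. -/
def outDeg {α : Type*} [DecidableEq α] (E : Finset (α × α)) (u : α) : ℕ :=
  (E.filter fun e => e.1 = u).card

/-- In-degree of `u` in `E`. -/
def inDeg {α : Type*} [DecidableEq α] (E : Finset (α × α)) (u : α) : ℕ :=
  (E.filter fun e => e.2 = u).card

/-- A configuration assigns to each color an edge set. -/
abbrev Cfg := ℕ → Finset (ℕ × ℕ)

/-- The node set `V = {1, …, N}`. -/
def V (N : ℕ) : Finset ℕ := Finset.Icc 1 N

/-- The root set `ℛ = {1, …, M}`. -/
def R (M : ℕ) : Finset ℕ := Finset.Icc 1 M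

/-- `u` has an incoming `i`-edge (root `i` counts its server link). -/
def HasIn (E : Cfg) (i u : ℕ) : Prop := (∃ w, (w, u) ∈ E i) ∨ u = i

/-- Incoming count of `u`: incoming edges of all colors, plus 1 if `u` is a root. -/
def incCount (M : ℕ) (E : Cfg) (u : ℕ) : ℕ :=
  (∑ i ∈ R M, inDeg (E i) u) + (if u ∈ R M then 1 else 0)

/-- Total out-degree `d(u)`. -/
def dtot (M : ℕ) (E : Cfg) (u : ℕ) : ℕ := ∑ i ∈ R M, outDeg (E i) u

/-- Edges are ordered pairs of distinct nodes of `V`. -/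
def ValidEdges (N M : ℕ) (E : Cfg) : Prop :=
  ∀ i ∈ R M, ∀ e ∈ E i, e.1 ∈ V N ∧ e.2 ∈ V N ∧ e.1 ≠ e.2

/-- Assumption (Tree Initially). -/
def TreeInit (N M K : ℕ) (E : Cfg) : Prop :=
  (∀ u ∈ V N, incCount M E u ≤ K) ∧
  (∀ i ∈ R M, ∀ u ∈ V N, inDeg (E i) u ≤ 1) ∧
  (∀ i ∈ R M, inDeg (E i) i = 0)

/-- A node is available if it has spare capacity and some incoming edge. -/
def Available (M : ℕ) (E : Cfg) (dbar : ℕ → ℕ) (v : ℕ) : Prop :=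
  dtot M E v < dbar v ∧ ∃ i ∈ R M, HasIn E i v

/-- An Add is applicable at `(u_p, u, i)`. -/
def AddApp (N M K : ℕ) (E : Cfg) (dbar : ℕ → ℕ) (up u i : ℕ) : Prop :=
  i ∈ R M ∧ up ∈ V N ∧ u ∈ V N ∧
  incCount M E u < K ∧ ¬ HasIn E i u ∧ HasIn E i up ∧ dtot M E up < dbar up

/-- An Insert is applicable at `(u_p, u, i)` with `i`-child `u_c` of `u_p`. -/
def InsertApp (N M K : ℕ) (E : Cfg) (up u uc i : ℕ) : Prop :=
  i ∈ R M ∧ up ∈ V N ∧ u ∈ V N ∧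
  incCount M E u < K ∧ ¬ HasIn E i u ∧ HasIn E i up ∧ (up, uc) ∈ E i

/-- A Jump is applicable at `(u, v, i)`. -/
def JumpApp (M : ℕ) (E : Cfg) (dbar : ℕ → ℕ) (u v i : ℕ) : Prop :=
  i ∈ R M ∧ (∃ up, (up, u) ∈ E i) ∧ Available M E dbar v ∧ HasIn E i v ∧
  depth (E i) i v + 1 < depth (E i) i u

/-- A LeafSwap is applicable at `(u, v, i)`. -/
def LeafSwapApp (M : ℕ) (E : Cfg) (u v i : ℕ) : Prop :=
  i ∈ R M ∧ (∃ up, (up, u) ∈ E i) ∧ (∃ vp, (vp, v) ∈ E i) ∧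
  outDeg (E i) v = 0 ∧ 0 < outDeg (E i) u ∧
  depth (E i) i v < depth (E i) i u

/-- A MixSwap is applicable at `(u, u_c, v, v_c, i, j)`. -/
def MixSwapApp (M : ℕ) (E : Cfg) (u uc v vc i j : ℕ) : Prop :=
  i ∈ R M ∧ j ∈ R M ∧ i ≠ j ∧ u ≠ v ∧
  (u, uc) ∈ E i ∧ (v, vc) ∈ E j ∧ uc ≠ v ∧ vc ≠ u ∧
  depth (E i) i v ≤ depth (E i) i u ∧ depth (E j) j u ≤ depth (E j) j v ∧
  ((depth (E i) i u, depth (E j) j u) ≠ (depth (E i) i v, depth (E j) j v) ∨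
    ((u : ℤ) - (v : ℤ)) * ((j : ℤ) - (i : ℤ)) > 0)

/-- Result of performing an Add. -/
def doAdd (E : Cfg) (up u i : ℕ) : Cfg :=
  fun l => if l = i then insert (up, u) (E l) else E l

/-- Result of performing an Insert. -/
def doInsert (E : Cfg) (up u uc i : ℕ) : Cfg :=
  fun l => if l = i then insert (up, u) (insert (u, uc) ((E l).erase (up, uc))) else E l

/-- Result of performing a Jump (parent `u_p` is replaced by `v`). -/
def doJump (E : Cfg) (up u v i : ℕ) : Cfg :=
  fun l => if l = i then insert (v, u) ((E l).erase (up, u)) else E l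

/-- Result of performing a LeafSwap (`u` and `v` exchange parents). -/
def doLeafSwap (E : Cfg) (up u vp v i : ℕ) : Cfg :=
  fun l => if l = i then
    insert (up, v) (insert (vp, u) (((E l).erase (up, u)).erase (vp, v))) else E l

/-- Result of performing a MixSwap (`u` and `v` exchange the children `u_c`, `v_c`). -/
def doMixSwap (E : Cfg) (u uc v vc i j : ℕ) : Cfg :=
  fun l => if l = i then insert (v, uc) ((E l).erase (u, uc))
    else if l = j then insert (u, vc) ((E l).erase (v, vc)) else E l

/-- One step of the algorithm: perform any applicable Add, Insert, Jump,
LeafSwap or MixSwap. -/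
def Step (N M K : ℕ) (dbar : ℕ → ℕ) (E E' : Cfg) : Prop :=
  (∃ up u i, AddApp N M K E dbar up u i ∧ E' = doAdd E up u i) ∨
  (∃ up u uc i, InsertApp N M K E up u uc i ∧ E' = doInsert E up u uc i) ∨
  (∃ up u v i, (up, u) ∈ E i ∧ JumpApp M E dbar u v i ∧ E' = doJump E up u v i) ∨
  (∃ up u vp v i, (up, u) ∈ E i ∧ (vp, v) ∈ E i ∧ LeafSwapApp M E u v i ∧
      E' = doLeafSwap E up u vp v i) ∨
  (∃ u uc v vc i j, MixSwapApp M E u uc v vc i j ∧ E' = doMixSwap E u uc v vc i j)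

/-- Total number of edges `|E|`. -/
def numE (M : ℕ) (E : Cfg) : ℕ := ∑ i ∈ R M, (E i).card

/-- `Y = Σ_u Σ_i min(L_i(u), N)`. -/
noncomputable def Yval (N M : ℕ) (E : Cfg) : ℕ :=
  ∑ u ∈ V N, ∑ i ∈ R M, (min (depth (E i) i u) (N : ℕ∞)).toNat

/-- `S = Σ_u u · Σ_i i · d_i(u)`. -/
def Sval (N M : ℕ) (E : Cfg) : ℕ :=
  ∑ u ∈ V N, u * ∑ i ∈ R M, i * outDeg (E i) u


section Depth

variable {α : Type*} {E : Finset (α × α)} {r p u v w : α} {m n : ℕ}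

theorem Walk.zero : Walk E r r 0 := ⟨fun _ => r, rfl, rfl, by simp⟩

theorem Walk.snoc (h : Walk E r u m) (he : (u, v) ∈ E) : Walk E r v (m + 1) := by
  obtain ⟨f, h0, hm, hstep⟩ := h
  refine ⟨Function.update f (m + 1) v, by simp [h0], by simp, fun k hk => ?_⟩
  rcases Nat.lt_succ_iff_lt_or_eq.1 hk with hk | rfl
  · simpa [Function.update_of_ne (by omega : k ≠ m + 1),
      Function.update_of_ne (by omega : k + 1 ≠ m + 1)] using hstep k hk
  · simpa [Function.update_of_ne (by omega : k ≠ k + 1), hm] using he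

theorem Walk.exists_pred (h : Walk E r u (m + 1)) : ∃ p, Walk E r p m ∧ (p, u) ∈ E := by
  obtain ⟨f, h0, hm, hstep⟩ := h
  exact ⟨f m, ⟨f, h0, rfl, fun k hk => hstep k (by omega)⟩, hm ▸ hstep m (by omega)⟩

theorem Walk.eq_of_length_zero (h : Walk E r u 0) : u = r := by
  obtain ⟨f, h0, h1, -⟩ := h
  rw [← h1, h0]

theorem depth_le_of_walk (h : Walk E r u m) : depth E r u ≤ m :=
  sInf_le ⟨m, rfl, h⟩

theorem depth_self : depth E r r = 0 :=
  nonpos_iff_eq_zero.1 (by simpa using depth_le_of_walk (Walk.zero (E := E) (r := r)))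

theorem walk_of_depth_eq (h : depth E r u = n) : Walk E r u n := by
  have hne : {x : ℕ∞ | ∃ m : ℕ, x = m ∧ Walk E r u m}.Nonempty := by
    by_contra hS
    rw [Set.not_nonempty_iff_eq_empty] at hS
    simp [depth, hS] at h
  obtain ⟨m, hm, hw⟩ := csInf_mem hne
  rw [← depth, h] at hm
  exact (Nat.cast_injective hm : n = m) ▸ hw

theorem depth_le_depth_add_one (he : (p, u) ∈ E) : depth E r u ≤ depth E r p + 1 := by
  by_cases htop : depth E r p = ⊤
  · simp [htop]
  obtain ⟨m, hm⟩ := ENat.ne_top_iff_exists.1 htop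
  rw [← hm]
  exact_mod_cast depth_le_of_walk ((walk_of_depth_eq hm.symm).snoc he)

theorem exists_parent (h : depth E r u = n) (hn : n ≠ 0) :
    ∃ p, (p, u) ∈ E ∧ depth E r p = ↑(n - 1) := by
  obtain ⟨p, hp, hpu⟩ :=
    (walk_of_depth_eq (n := n - 1 + 1) (by rw [h, Nat.sub_add_cancel (by omega)])).exists_pred
  refine ⟨p, hpu, le_antisymm (depth_le_of_walk hp) ?_⟩
  have hle := depth_le_depth_add_one (r := r) hpu
  rw [h, ← Nat.sub_add_cancel (Nat.one_le_iff_ne_zero.2 hn), Nat.cast_add, Nat.cast_one] at hle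
  exact (WithTop.add_le_add_iff_right ENat.one_ne_top).1 hle

theorem depth_eq_depth_add_one (he : (p, w) ∈ E) (huniq : ∀ q, (q, w) ∈ E → q = p)
    (hwr : w ≠ r) : depth E r w = depth E r p + 1 := by
  refine le_antisymm (depth_le_depth_add_one he) ?_
  by_cases htop : depth E r w = ⊤
  · simp [htop]
  obtain ⟨m, hm⟩ := ENat.ne_top_iff_exists.1 htop
  rw [← hm]
  obtain _ | m := m
  · exact absurd (walk_of_depth_eq hm.symm).eq_of_length_zero hwr
  obtain ⟨q, hq, hqw⟩ := (walk_of_depth_eq hm.symm).exists_pred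
  rw [← huniq q hqw]
  exact_mod_cast add_le_add (depth_le_of_walk hq) le_rfl

variable [DecidableEq α]

theorem outDeg_pos_iff : 0 < outDeg E u ↔ ∃ v, (u, v) ∈ E := by
  simp [outDeg, Finset.card_pos, Finset.filter_nonempty_iff]

theorem inDeg_pos_iff : 0 < inDeg E w ↔ ∃ p, (p, w) ∈ E := by
  simp [inDeg, Finset.card_pos, Finset.filter_nonempty_iff]

theorem eq_of_inDeg_le_one (h : inDeg E w ≤ 1) (hp : (p, w) ∈ E) {q : α} (hq : (q, w) ∈ E) :
    q = p :=
  congrArg Prod.fst (Finset.card_le_one.1 h _ (Finset.mem_filter.2 ⟨hq, rfl⟩) _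
    (Finset.mem_filter.2 ⟨hp, rfl⟩))

end Depth

section Level

variable {α : Type*} {E : Finset (α × α)} {r u : α} {s : Finset α} {d : ℕ}

noncomputable def level (E : Finset (α × α)) (r : α) (s : Finset α) (d : ℕ) : Finset α :=
  s.filter fun u => depth E r u = d

theorem mem_level : u ∈ level E r s d ↔ u ∈ s ∧ depth E r u = d :=
  Finset.mem_filter

theorem sum_card_level_le [DecidableEq α] (D : Finset ℕ) :
    ∑ d ∈ D, (level E r s d).card ≤ s.card := by
  rw [← Finset.card_biUnion]
  · exact Finset.card_le_card (Finset.biUnion_subset.2 fun _ _ => Finset.filter_subset _ _)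
  · intro d _ d' _ hdd'
    refine Finset.disjoint_left.2 fun u hu hu' => hdd' ?_
    exact_mod_cast (mem_level.1 hu).2.symm.trans (mem_level.1 hu').2

/-- Every edge leaving level `d` ends in level `d + 1`, and distinct such edges have distinct
heads. -/
theorem sum_outDeg_level_le [DecidableEq α] (hs : ∀ e ∈ E, e.2 ∈ s)
    (hin : ∀ w ∈ s, inDeg E w ≤ 1) (hr : inDeg E r = 0) :
    ∑ u ∈ level E r s d, outDeg E u ≤ (level E r s (d + 1)).card := by
  have hout : ∑ u ∈ level E r s d, outDeg E u = (E.filter (·.1 ∈ level E r s d)).card := by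
    rw [Finset.card_eq_sum_card_fiberwise (s := E.filter (·.1 ∈ level E r s d)) (f := Prod.fst)
      (t := level E r s d) fun e he => (Finset.mem_filter.1 he).2]
    refine Finset.sum_congr rfl fun u hu => ?_
    rw [outDeg, Finset.filter_filter]
    congr 1
    exact Finset.filter_congr fun e _ => ⟨fun h => ⟨h ▸ hu, h⟩, And.right⟩
  rw [hout]
  refine Finset.card_le_card_of_injOn Prod.snd (fun ⟨a, b⟩ he => ?_)
    fun ⟨a, b⟩ he ⟨a', b'⟩ he' hbb' => ?_
  · obtain ⟨hab, ha⟩ := Finset.mem_filter.1 he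
    have hbr : b ≠ r := by
      rintro rfl
      simpa [hr] using (inDeg_pos_iff (E := E)).2 ⟨a, hab⟩
    refine mem_level.2 ⟨hs _ hab, ?_⟩
    rw [depth_eq_depth_add_one hab (fun q hq => eq_of_inDeg_le_one (hin b (hs _ hab)) hab hq)
      hbr, (mem_level.1 ha).2]
    norm_cast
  · obtain rfl : b = b' := hbb'
    have hab := (Finset.mem_filter.1 he).1
    rw [eq_of_inDeg_le_one (hin b (hs _ hab)) hab (Finset.mem_filter.1 he').1]

end Level

theorem two_mul_card_le_sum_add_card_filter {β : Type*} {s : Finset β} {f : β → ℕ}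
    (hf : ∀ x ∈ s, 1 ≤ f x) : 2 * s.card ≤ ∑ x ∈ s, f x + (s.filter (f · < 2)).card := by
  rw [Finset.card_filter, ← Finset.sum_add_distrib, mul_comm, ← smul_eq_mul,
    ← Finset.sum_const]
  refine Finset.sum_le_sum fun x hx => ?_
  have := hf x hx
  split_ifs <;> omega

theorem two_pow_add_le_of_two_mul_le {a : ℕ → ℕ} {m t : ℕ} (h0 : m + 1 ≤ a 0)
    (hstep : ∀ k < t, 2 * a k ≤ a (k + 1) + m) : ∀ k ≤ t, 2 ^ k + m ≤ a k := by
  intro k hk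
  induction k with
  | zero => simpa [add_comm] using h0
  | succ k ih =>
    have := hstep k hk
    have := ih (by omega)
    rw [pow_succ]
    omega

section Stable

variable {N M K : ℕ} {E : Cfg} {dbar : ℕ → ℕ} {i j p u v w x y uc vc c d n : ℕ}

theorem outDeg_le_dtot (hi : i ∈ R M) : outDeg (E i) u ≤ dtot M E u :=
  Finset.single_le_sum (f := fun j => outDeg (E j) u) (fun _ _ => Nat.zero_le _) hi

theorem TreeInit.depth_eq_depth_add_one (htree : TreeInit N M K E) (hvalid : ValidEdges N M E)
    (hi : i ∈ R M) (he : (p, w) ∈ E i) : depth (E i) i w = depth (E i) i p + 1 := by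
  have hwV := (hvalid i hi _ he).2.1
  refine P2P.depth_eq_depth_add_one he
    (fun q hq => eq_of_inDeg_le_one (htree.2.1 i hi w hwV) he hq) ?_
  rintro rfl
  simpa [htree.2.2 w hi] using (inDeg_pos_iff (E := E w)).2 ⟨p, he⟩

theorem outDeg_pos_of_forall_not_leafSwap (hi : i ∈ R M)
    (hleaf : ∀ u v, ¬ LeafSwapApp M E u v i) (hd : 1 ≤ d) (hdn : d + 2 ≤ n)
    (hu : depth (E i) i u = d) (hw : depth (E i) i w = n) : 0 < outDeg (E i) u := by
  obtain ⟨x, hxw, hx⟩ := exists_parent hw (by omega)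
  obtain ⟨y, hyx, -⟩ := exists_parent hx (by omega)
  obtain ⟨p, hpu, -⟩ := exists_parent hu (by omega)
  by_contra hleafu
  refine hleaf x u ⟨hi, ⟨y, hyx⟩, ⟨p, hpu⟩, by omega, outDeg_pos_iff.2 ⟨w, hxw⟩, ?_⟩
  rw [hu, hx]
  exact_mod_cast (by omega : d < n - 1)

theorem two_le_dtot_of_forall_not_jump (hi : i ∈ R M)
    (hcap : ∀ u ∈ V N, dtot M E u ≤ dbar u) (hroot : ∀ i ∈ R M, 1 ≤ outDeg (E i) i)
    (hdiv : ∀ u ∈ V N, u ∉ R M → dbar u ≠ 1) (hjump : ∀ u v, ¬ JumpApp M E dbar u v i)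
    (huV : u ∈ V N) (hpu : (p, u) ∈ E i) (hui : u ≠ i) (hout : 0 < outDeg (E i) u)
    (hyx : (y, x) ∈ E i) (hux : depth (E i) i u + 1 < depth (E i) i x) :
    2 ≤ dtot M E u := by
  by_cases huR : u ∈ R M
  · calc 2 ≤ outDeg (E i) u + outDeg (E u) u := by have := hroot u huR; omega
      _ = ∑ j ∈ {i, u}, outDeg (E j) u :=
        (Finset.sum_pair (f := fun j => outDeg (E j) u) hui.symm).symm
      _ ≤ dtot M E u :=
        Finset.sum_le_sum_of_subset (Finset.insert_subset hi (Finset.singleton_subset_iff.2 huR))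
  · have hsat : dbar u ≤ dtot M E u := not_lt.1 fun hav =>
      hjump x u ⟨hi, ⟨y, hyx⟩, ⟨hav, i, hi, .inl ⟨p, hpu⟩⟩, .inl ⟨p, hpu⟩, hux⟩
    have := hcap u huV
    have := hdiv u huV huR
    have := outDeg_le_dtot (E := E) (u := u) hi
    omega

theorem mixSwapApp_of_depth_eq (htree : TreeInit N M K E) (hvalid : ValidEdges N M E)
    (hi : i ∈ R M) (hj : j ∈ R M) (hij : i ≠ j) (huv : u ≠ v)
    (huc : (u, uc) ∈ E i) (hvc : (v, vc) ∈ E j)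
    (hu : depth (E i) i u = d) (hv : depth (E i) i v = d)
    (hle : depth (E j) j u ≤ depth (E j) j v) (hvtop : depth (E j) j v ≠ ⊤)
    (htie : depth (E j) j u ≠ depth (E j) j v ∨ ((u : ℤ) - v) * ((j : ℤ) - i) > 0) :
    MixSwapApp M E u uc v vc i j := by
  have hucv : uc ≠ v := by
    rintro rfl
    have := htree.depth_eq_depth_add_one hvalid hi huc
    rw [hu, hv] at this
    exact absurd this (by norm_cast; omega)
  have hvcu : vc ≠ u := by
    rintro rfl
    rw [htree.depth_eq_depth_add_one hvalid hj hvc] at hle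
    exact ((ENat.lt_add_one_iff hvtop).2 le_rfl).not_ge hle
  refine ⟨hi, hj, hij, huv, huc, hvc, hucv, hvcu, (hv.trans hu.symm).le, hle, ?_⟩
  exact htie.imp (fun h hpair => h (Prod.ext_iff.1 hpair).2) id

theorem eq_of_outDeg_pos_of_forall_not_mixSwap (htree : TreeInit N M K E)
    (hvalid : ValidEdges N M E)
    (hend : ∀ j ∈ R M, ∀ e ∈ E j, depth (E j) j e.1 ≠ ⊤ ∧ depth (E j) j e.2 ≠ ⊤)
    (hmix : ∀ u uc v vc i j, ¬ MixSwapApp M E u uc v vc i j)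
    (hi : i ∈ R M) (hj : j ∈ R M) (hij : i ≠ j)
    (hu : depth (E i) i u = d) (hv : depth (E i) i v = d)
    (hui : 0 < outDeg (E i) u) (hvi : 0 < outDeg (E i) v)
    (huj : 0 < outDeg (E j) u) (hvj : 0 < outDeg (E j) v) : u = v := by
  by_contra huv
  obtain ⟨uc, huc⟩ := outDeg_pos_iff.1 hui
  obtain ⟨vc, hvc⟩ := outDeg_pos_iff.1 hvi
  obtain ⟨uc', huc'⟩ := outDeg_pos_iff.1 huj
  obtain ⟨vc', hvc'⟩ := outDeg_pos_iff.1 hvj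
  have hutop := (hend j hj _ huc').1
  have hvtop := (hend j hj _ hvc').1
  rcases lt_trichotomy (depth (E j) j u) (depth (E j) j v) with hlt | heq | hgt
  · exact hmix _ _ _ _ i j (mixSwapApp_of_depth_eq htree hvalid hi hj hij huv huc hvc' hu hv
      hlt.le hvtop (.inl hlt.ne))
  · have hne : ((u : ℤ) - v) * ((j : ℤ) - i) ≠ 0 :=
      mul_ne_zero (sub_ne_zero.2 (by exact_mod_cast huv))
        (sub_ne_zero.2 (by exact_mod_cast hij.symm))
    rcases hne.lt_or_gt with hneg | hpos
    · refine hmix _ _ _ _ i j (mixSwapApp_of_depth_eq htree hvalid hi hj hij (Ne.symm huv) hvc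
        huc' hv hu heq.ge hutop (.inr ?_))
      linarith [show ((v : ℤ) - u) * (j - i) = -(((u : ℤ) - v) * (j - i)) by ring]
    · exact hmix _ _ _ _ i j (mixSwapApp_of_depth_eq htree hvalid hi hj hij huv huc hvc' hu hv
        heq.le hvtop (.inr hpos))
  · exact hmix _ _ _ _ i j (mixSwapApp_of_depth_eq htree hvalid hi hj hij (Ne.symm huv) hvc huc'
      hv hu hgt.le hutop (.inl hgt.ne))

theorem card_filter_outDeg_lt_two_le (htree : TreeInit N M K E) (hvalid : ValidEdges N M E)
    (hend : ∀ j ∈ R M, ∀ e ∈ E j, depth (E j) j e.1 ≠ ⊤ ∧ depth (E j) j e.2 ≠ ⊤)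
    (hmix : ∀ u uc v vc i j, ¬ MixSwapApp M E u uc v vc i j) (hi : i ∈ R M)
    (hout : ∀ u ∈ level (E i) i (V N) d, 0 < outDeg (E i) u)
    (hdeg : ∀ u ∈ level (E i) i (V N) d, 2 ≤ dtot M E u) :
    ((level (E i) i (V N) d).filter (outDeg (E i) · < 2)).card ≤ M - 1 := by
  have hcard : ((R M).erase i).card = M - 1 := by
    rw [Finset.card_erase_of_mem hi, R, Nat.card_Icc, Nat.add_sub_cancel]
  rw [← hcard]
  refine Finset.card_le_card_of_forall_subsingleton (fun u j => 0 < outDeg (E j) u)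
    (fun u hu => ?_) fun j hj u hu v hv => ?_
  · obtain ⟨hul, hu2⟩ := Finset.mem_filter.1 hu
    have hsplit := Finset.add_sum_erase (R M) (fun j => outDeg (E j) u) hi
    have h2 := hdeg u hul
    rw [dtot] at h2
    obtain ⟨j, hj, hju⟩ := Finset.exists_ne_zero_of_sum_ne_zero
      (s := (R M).erase i) (f := fun j => outDeg (E j) u) (by omega)
    exact ⟨j, hj, Nat.pos_of_ne_zero hju⟩
  · obtain ⟨hji, hjR⟩ := Finset.mem_erase.1 hj
    have hul := (Finset.mem_filter.1 hu.1).1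
    have hvl := (Finset.mem_filter.1 hv.1).1
    exact eq_of_outDeg_pos_of_forall_not_mixSwap htree hvalid hend hmix hi hjR (Ne.symm hji)
      (mem_level.1 hul).2 (mem_level.1 hvl).2 (hout u hul) (hout v hvl) hu.2 hv.2

theorem two_mul_card_level_le (htree : TreeInit N M K E) (hvalid : ValidEdges N M E)
    (hend : ∀ j ∈ R M, ∀ e ∈ E j, depth (E j) j e.1 ≠ ⊤ ∧ depth (E j) j e.2 ≠ ⊤)
    (hmix : ∀ u uc v vc i j, ¬ MixSwapApp M E u uc v vc i j) (hi : i ∈ R M)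
    (hout : ∀ u ∈ level (E i) i (V N) d, 0 < outDeg (E i) u)
    (hdeg : ∀ u ∈ level (E i) i (V N) d, 2 ≤ dtot M E u) :
    2 * (level (E i) i (V N) d).card ≤ (level (E i) i (V N) (d + 1)).card + (M - 1) :=
  (two_mul_card_le_sum_add_card_filter hout).trans <| add_le_add
    (sum_outDeg_level_le (fun e he => (hvalid i hi e he).2.1) (htree.2.1 i hi) (htree.2.2 i hi))
    (card_filter_outDeg_lt_two_le htree hvalid hend hmix hi hout hdeg)

theorem two_mul_card_level_le_of_add_two_le (htree : TreeInit N M K E)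
    (hvalid : ValidEdges N M E) (hcap : ∀ u ∈ V N, dtot M E u ≤ dbar u)
    (hroot : ∀ i ∈ R M, 1 ≤ outDeg (E i) i) (hdiv : ∀ u ∈ V N, u ∉ R M → dbar u ≠ 1)
    (hend : ∀ j ∈ R M, ∀ e ∈ E j, depth (E j) j e.1 ≠ ⊤ ∧ depth (E j) j e.2 ≠ ⊤)
    (hjump : ∀ u v, ¬ JumpApp M E dbar u v i) (hleaf : ∀ u v, ¬ LeafSwapApp M E u v i)
    (hmix : ∀ u uc v vc i j, ¬ MixSwapApp M E u uc v vc i j) (hi : i ∈ R M)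
    (hd : 1 ≤ d) (hdn : d + 2 ≤ n) (hw : depth (E i) i w = n) :
    2 * (level (E i) i (V N) d).card ≤ (level (E i) i (V N) (d + 1)).card + (M - 1) := by
  have hout : ∀ u ∈ level (E i) i (V N) d, 0 < outDeg (E i) u := fun u hu =>
    outDeg_pos_of_forall_not_leafSwap hi hleaf hd hdn (mem_level.1 hu).2 hw
  refine two_mul_card_level_le htree hvalid hend hmix hi hout fun u hu => ?_
  obtain ⟨huV, hud⟩ := mem_level.1 hu
  obtain ⟨p, hpu, -⟩ := exists_parent hud (by omega)
  obtain ⟨y, hyw, -⟩ := exists_parent hw (by omega)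
  have hui : u ≠ i := by
    rintro rfl
    rw [depth_self] at hud
    exact absurd hud (by norm_cast; omega)
  refine two_le_dtot_of_forall_not_jump hi hcap hroot hdiv hjump huV hpu hui (hout u hu) hyw ?_
  rw [hud, hw]
  exact_mod_cast (by omega : d + 1 < n)

theorem two_pow_sub_le (htree : TreeInit N M K E) (hvalid : ValidEdges N M E)
    (hcap : ∀ u ∈ V N, dtot M E u ≤ dbar u) (hroot : ∀ i ∈ R M, 1 ≤ outDeg (E i) i)
    (hdiv : ∀ u ∈ V N, u ∉ R M → dbar u ≠ 1)
    (hend : ∀ j ∈ R M, ∀ e ∈ E j, depth (E j) j e.1 ≠ ⊤ ∧ depth (E j) j e.2 ≠ ⊤)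
    (hc : 1 ≤ c) (hshower : M ≤ {u : ℕ | u ∈ V N ∧ depth (E i) i u = (c : ℕ∞)}.ncard)
    (hjump : ∀ u v, ¬ JumpApp M E dbar u v i) (hleaf : ∀ u v, ¬ LeafSwapApp M E u v i)
    (hmix : ∀ u uc v vc i j, ¬ MixSwapApp M E u uc v vc i j) (hi : i ∈ R M)
    (hw : depth (E i) i w = n) : 2 ^ (n - c) ≤ N + 1 := by
  have hM : 0 < M := (Finset.mem_Icc.1 hi).1.trans (Finset.mem_Icc.1 hi).2
  have hbase : M ≤ (level (E i) i (V N) c).card := by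
    rwa [← Set.ncard_coe_finset, level, Finset.coe_filter]
  have hgrow := two_pow_add_le_of_two_mul_le (a := fun k => (level (E i) i (V N) (c + k)).card)
    (t := n - c - 1) (by simp only [add_zero]; omega) fun k _ =>
      two_mul_card_level_le_of_add_two_le htree hvalid hcap hroot hdiv hend hjump hleaf hmix hi
        (d := c + k) (by omega) (by omega) hw
  have hsum : ∑ k ∈ Finset.range (n - c), 2 ^ k ≤ N := calc
    _ ≤ ∑ k ∈ Finset.range (n - c), (level (E i) i (V N) (c + k)).card :=
      Finset.sum_le_sum fun k hk => (Nat.le_add_right _ _).trans (hgrow k (by simp at hk; omega))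
    _ = ∑ d ∈ Finset.Ico c n, (level (E i) i (V N) d).card :=
      (Finset.sum_Ico_eq_sum_range (fun d => (level (E i) i (V N) d).card) c n).symm
    _ ≤ (V N).card := sum_card_level_le _
    _ = N := by simp [V]
  rw [Nat.geomSum_eq le_rfl, Nat.div_one] at hsum
  have := Nat.one_le_two_pow (n := n - c)
  omega

end Stable

theorem tree_depth_bound_general
    (N M K : ℕ)
    (E : Cfg) (dbar : ℕ → ℕ)
    (hvalid : ValidEdges N M E) (htree : TreeInit N M K E)
    (hcap : ∀ u ∈ V N, dtot M E u ≤ dbar u)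
    (hroot : ∀ i ∈ R M, 1 ≤ dbar i ∧ 1 ≤ outDeg (E i) i)
    (hdiv : ∀ u ∈ V N, u ∉ R M → dbar u ≠ 1)
    (hend : ∀ j ∈ R M, ∀ e ∈ E j, depth (E j) j e.1 ≠ ⊤ ∧ depth (E j) j e.2 ≠ ⊤)
    (c : ℕ) (hc : 1 ≤ c)
    (hshower : ∀ i ∈ R M,
      M ≤ {u : ℕ | u ∈ V N ∧ depth (E i) i u = (c : ℕ∞)}.ncard)
    (hnomove : ∀ u v i : ℕ, ¬ JumpApp M E dbar u v i ∧ ¬ LeafSwapApp M E u v i)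
    (hnomix : ∀ u uc v vc i j : ℕ, ¬ MixSwapApp M E u uc v vc i j) :
    ∀ i ∈ R M, ∀ u ∈ V N, ∀ n : ℕ, depth (E i) i u = (n : ℕ∞) →
      (n : ℝ) ≤ Real.logb 2 (N + 1) + c := by
  intro i hi u _ n hn
  have hpow : 2 ^ (n - c) ≤ N + 1 :=
    two_pow_sub_le htree hvalid hcap (fun i hi => (hroot i hi).2) hdiv hend hc (hshower i hi)
      (fun u v => (hnomove u v i).1) (fun u v => (hnomove u v i).2) hnomix hi hn
  have hlog : ((n - c : ℕ) : ℝ) ≤ Real.logb 2 (N + 1) := by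
    rw [Real.le_logb_iff_rpow_le one_lt_two (by positivity), Real.rpow_natCast]
    exact_mod_cast hpow
  have hnc : (n : ℝ) ≤ (n - c : ℕ) + c := by exact_mod_cast (by omega : n ≤ n - c + c)
  linarith

/-- under Tree Initially, capacity, Root Child, Diversity Degree,
edges inside the trees, and the Shower-head assumption with parameter `c`, if no
Jump, LeafSwap or MixSwap is applicable anywhere then every tree has depth at
most `log₂(N+1) + c`. -/
theorem tree_depth_bound
    (N M K : ℕ) (hK : 0 < K) (hKM : K ≤ M) (hMN : M ≤ N)
    (E : Cfg) (dbar : ℕ → ℕ)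
    (hvalid : ValidEdges N M E) (htree : TreeInit N M K E)
    (hcap : ∀ u ∈ V N, dtot M E u ≤ dbar u)
    (hroot : ∀ i ∈ R M, 1 ≤ dbar i ∧ 1 ≤ outDeg (E i) i)
    (hdiv : ∀ u ∈ V N, u ∉ R M → dbar u ≠ 1)
    (hend : ∀ j ∈ R M, ∀ e ∈ E j, depth (E j) j e.1 ≠ ⊤ ∧ depth (E j) j e.2 ≠ ⊤)
    (c : ℕ) (hc : 1 ≤ c)
    (hshower : ∀ i ∈ R M,
      M ≤ {u : ℕ | u ∈ V N ∧ depth (E i) i u = (c : ℕ∞)}.ncard)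
    (hnomove : ∀ u v i : ℕ, ¬ JumpApp M E dbar u v i ∧ ¬ LeafSwapApp M E u v i)
    (hnomix : ∀ u uc v vc i j : ℕ, ¬ MixSwapApp M E u uc v vc i j) :
    ∀ i ∈ R M, ∀ u ∈ V N, ∀ n : ℕ, depth (E i) i u = (n : ℕ∞) →
      (n : ℝ) ≤ Real.logb 2 (N + 1) + c :=
  tree_depth_bound_general N M K E dbar hvalid htree hcap hroot hdiv hend c hc hshower hnomove
    hnomix

end P2P
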